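/- Certificate of optimality: let Q ∈ Sym(dn), R* ∈ O(d)^n, and Λ* = SymBlockDiag_d(Q R*ᵀ R*). If C := Q − Λ* ⪰ 0 and (Q − Λ*) R*ᵀ = 0, then Z* = R*ᵀ R* is a minimizer of the SDP min{tr(Q Z) : Z ⪰ 0, BDiag_d(Z) = Diag(I_d,…,I_d)}. -/

import Mathlib

open Matrix

/-- The Gram matrix `Rᵀ R ∈ ℝ^{dn×dn}` of a block matrix `R = (R₁ ⋯ Rₙ) ∈ ℝ^{d×dn}`. -/
def gram {d n : ℕ} (R : Fin n → Matrix (Fin d) (Fin d) ℝ) :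
    Matrix (Fin n × Fin d) (Fin n × Fin d) ℝ :=
  Matrix.of fun p q => ((R p.1)ᵀ * R q.1) p.2 q.2

/-- The symmetrized `d×d` block-diagonal of a `dn×dn` matrix. -/
noncomputable def symBlockDiag {d n : ℕ} (M : Matrix (Fin n × Fin d) (Fin n × Fin d) ℝ) :
    Matrix (Fin n × Fin d) (Fin n × Fin d) ℝ :=
  Matrix.of fun p q => if p.1 = q.1 then (M p q + M q p) / 2 else 0

/-- The transpose `Rᵀ ∈ ℝ^{dn×d}` of a block matrix `R = (R₁ ⋯ Rₙ) ∈ ℝ^{d×dn}`. -/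
def blockTranspose {d n : ℕ} (R : Fin n → Matrix (Fin d) (Fin d) ℝ) :
    Matrix (Fin n × Fin d) (Fin d) ℝ :=
  Matrix.of fun p c => R p.1 c p.2

/-- Feasibility for the SDP: `Z ⪰ 0` with each `d×d` diagonal block equal to `I_d`. -/
def SDPFeasible {d n : ℕ} (Z : Matrix (Fin n × Fin d) (Fin n × Fin d) ℝ) : Prop :=
  Z.PosSemidef ∧ ∀ (i : Fin n) (a b : Fin d), Z (i, a) (i, b) = (1 : Matrix (Fin d) (Fin d) ℝ) a b

/-
Weak duality: `Λ* = SymBlockDiag_d(Q R*ᵀ R*)` is supported on the diagonal blocks, on which every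
feasible `Z` is the identity, so `tr(Λ* Z) = tr Λ*` for all feasible `Z`. Since `Q − Λ* ⪰ 0` and
`Z ⪰ 0`, `tr(Q Z) ≥ tr(Λ* Z) = tr Λ*`. Complementary slackness `(Q − Λ*) R*ᵀ = 0` gives
`(Q − Λ*) R*ᵀ R* = 0`, so `Z* = R*ᵀ R*` attains this bound.
-/

section TraceInequalities

open scoped ComplexOrder

variable {m 𝕜 : Type*} [Fintype m] [DecidableEq m] [RCLike 𝕜]

lemma Matrix.PosSemidef.trace_mul_nonneg {A B : Matrix m m 𝕜} (hA : A.PosSemidef)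
    (hB : B.PosSemidef) : 0 ≤ (A * B).trace := by
  obtain ⟨W, rfl⟩ : ∃ W : Matrix m m 𝕜, B = Wᴴ * W := by
    open scoped MatrixOrder in
    exact CStarAlgebra.nonneg_iff_eq_star_mul_self.mp hB.nonneg
  rw [← mul_assoc, trace_mul_cycle]
  exact (hA.mul_mul_conjTranspose_same W).trace_nonneg

lemma trace_mul_le_trace_mul_of_posSemidef_sub {Q Λ Z : Matrix m m 𝕜}
    (hC : (Q - Λ).PosSemidef) (hZ : Z.PosSemidef) : (Λ * Z).trace ≤ (Q * Z).trace := by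
  have := hC.trace_mul_nonneg hZ
  rwa [sub_mul, trace_sub, sub_nonneg] at this

end TraceInequalities

section BlockMatrices

variable {d n : ℕ}

lemma gram_eq_blockTranspose_mul_transpose (R : Fin n → Matrix (Fin d) (Fin d) ℝ) :
    gram R = blockTranspose R * (blockTranspose R)ᵀ := by
  ext p q
  simp [_root_.gram, blockTranspose, mul_apply]

lemma gram_apply_diagBlock {R : Fin n → Matrix (Fin d) (Fin d) ℝ} (hR : ∀ i, (R i)ᵀ * R i = 1)
    (i : Fin n) (a b : Fin d) : gram R (i, a) (i, b) = (1 : Matrix (Fin d) (Fin d) ℝ) a b := by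
  simp [_root_.gram, hR i]

lemma trace_symBlockDiag_mul_of_diagBlock_eq_one (M : Matrix (Fin n × Fin d) (Fin n × Fin d) ℝ)
    {Z : Matrix (Fin n × Fin d) (Fin n × Fin d) ℝ}
    (hZ : ∀ (i : Fin n) (a b : Fin d), Z (i, a) (i, b) = (1 : Matrix (Fin d) (Fin d) ℝ) a b) :
    (symBlockDiag M * Z).trace = (symBlockDiag M).trace := by
  refine Finset.sum_congr rfl fun ⟨i, a⟩ _ => ?_
  rw [diag_apply, mul_apply, Fintype.sum_prod_type, Finset.sum_eq_single i]
  · simp only [symBlockDiag, of_apply, hZ, one_apply, diag_apply]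
    rw [Finset.sum_eq_single a] <;> simp +contextual [eq_comm]
  · intro j _ hj
    simp [symBlockDiag, Ne.symm hj]
  · simp

end BlockMatrices

theorem certificate_of_optimality_general {d n : ℕ}
    (Q : Matrix (Fin n × Fin d) (Fin n × Fin d) ℝ)
    (R : Fin n → Matrix (Fin d) (Fin d) ℝ)
    (hR : ∀ i, (R i)ᵀ * R i = 1)
    (hC : (Q - symBlockDiag (Q * gram R)).PosSemidef)
    (hfo : (Q - symBlockDiag (Q * gram R)) * blockTranspose R = 0) :
    ∀ Z : Matrix (Fin n × Fin d) (Fin n × Fin d) ℝ,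
      SDPFeasible Z → (Q * gram R).trace ≤ (Q * Z).trace := by
  rintro Z ⟨hZ, hZdiag⟩
  set Λ := symBlockDiag (Q * gram R)
  have hslack : (Q - Λ) * gram R = 0 := by
    rw [gram_eq_blockTranspose_mul_transpose, ← Matrix.mul_assoc, hfo, Matrix.zero_mul]
  calc (Q * gram R).trace = (Λ * gram R).trace := by
        rw [← sub_eq_zero, ← trace_sub, ← sub_mul, hslack, trace_zero]
    _ = (Λ * Z).trace := by
        rw [trace_symBlockDiag_mul_of_diagBlock_eq_one _ (gram_apply_diagBlock hR),
          trace_symBlockDiag_mul_of_diagBlock_eq_one _ hZdiag]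
    _ ≤ (Q * Z).trace := trace_mul_le_trace_mul_of_posSemidef_sub hC hZ

/-- Certificate of optimality: if `C = Q − Λ* ⪰ 0` and `(Q − Λ*) R*ᵀ = 0` for
`Λ* = SymBlockDiag_d(Q R*ᵀ R*)`, then `Z* = R*ᵀ R*` minimizes the SDP. -/
theorem certificate_of_optimality {d n : ℕ}
    (Q : Matrix (Fin n × Fin d) (Fin n × Fin d) ℝ) (hQ : Q.IsSymm)
    (R : Fin n → Matrix (Fin d) (Fin d) ℝ)
    (hR : ∀ i, (R i)ᵀ * R i = 1)
    (hC : (Q - symBlockDiag (Q * gram R)).PosSemidef)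
    (hfo : (Q - symBlockDiag (Q * gram R)) * blockTranspose R = 0) :
    ∀ Z : Matrix (Fin n × Fin d) (Fin n × Fin d) ℝ,
      SDPFeasible Z → (Q * gram R).trace ≤ (Q * Z).trace :=
  certificate_of_optimality_general Q R hR hC hfo
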